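/- arXiv:1604.00621 — 5 statements merged into one kernel-verified Lean document; each statement's English description precedes it below -/
import Mathlib

section
/- If E[V − τ] < 0, then M_∞ < ∞ P-almost surely; that is, P( sup_{j≥1} ( σ∘θ^{-j} + D∘θ^{-j} + Σ_{i=1}^{j} V∘θ^{-i} − Σ_{i=1}^{j} τ∘θ^{-i} ) < ∞ ) = 1. -/
/-!
Since `θ⁻¹` is ergodic and `V - τ + ε` still has negative mean for small `ε > 0`, Garsia's maximal
ergodic inequality shows that the Birkhoff sums of `V - τ + ε` along `θ⁻¹` are a.s. bounded above:
the partial sums of `V - τ` drift to `-∞` at least at linear rate `ε`. Since `σ + D` is integrable,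
Borel–Cantelli gives `|σ + D| ∘ θ⁻ʲ ≤ ε j` for all large `j`, so `S_j` is eventually bounded above.
-/

open MeasureTheory Filter

noncomputable section

variable {Ω : Type*}

/-- ψ(y, ω) = max( max( y + V ω, σ ω + D ω + V ω ) − τ ω, 0 ). -/
def psi (σ D V τ : Ω → ℝ) (y : ℝ) (ω : Ω) : ℝ :=
  max (max (y + V ω) (σ ω + D ω + V ω) - τ ω) 0

/-- S_j(ω) = σ(θ^{-j}ω) + D(θ^{-j}ω) + Σ_{i=1}^{j} V(θ^{-i}ω) − Σ_{i=1}^{j} τ(θ^{-i}ω),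
where `θi` denotes the inverse of `θ`. -/
def Sj (θi : Ω → Ω) (σ D V τ : Ω → ℝ) (j : ℕ) (ω : Ω) : ℝ :=
  σ (θi^[j] ω) + D (θi^[j] ω)
    + ∑ i ∈ Finset.Icc 1 j, V (θi^[i] ω)
    - ∑ i ∈ Finset.Icc 1 j, τ (θi^[i] ω)

/-- Loynes sequence: M_0 = 0 and M_n = max(0, max_{1 ≤ j ≤ n} S_j). -/
def Mn (θi : Ω → Ω) (σ D V τ : Ω → ℝ) (n : ℕ) (ω : Ω) : ℝ :=
  (Finset.Icc 1 n).fold max 0 (fun j => Sj θi σ D V τ j ω)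

/-- M_∞ = max(0, sup_{j ≥ 1} S_j) ∈ [0,∞]. -/
def Minf (θi : Ω → Ω) (σ D V τ : Ω → ℝ) (ω : Ω) : EReal :=
  max 0 (⨆ j : ℕ, ((Sj θi σ D V τ (j + 1) ω : ℝ) : EReal))

open Set

section Birkhoff

variable {α : Type*} {f : α → α} {g : α → ℝ}

def birkhoffMax (f : α → α) (g : α → ℝ) : ℕ → α → ℝ
  | 0, _ => 0
  | n + 1, x => max (birkhoffMax f g n x) (birkhoffSum f g (n + 1) x)

lemma birkhoffMax_nonneg : ∀ n x, 0 ≤ birkhoffMax f g n x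
  | 0, _ => le_rfl
  | n + 1, x => (birkhoffMax_nonneg n x).trans (le_max_left _ _)

lemma birkhoffMax_le_succ (n : ℕ) (x : α) : birkhoffMax f g n x ≤ birkhoffMax f g (n + 1) x :=
  le_max_left _ _

lemma birkhoffSum_le_birkhoffMax {k n : ℕ} (hk : k ≤ n) (x : α) :
    birkhoffSum f g k x ≤ birkhoffMax f g n x := by
  induction n with
  | zero => simp [Nat.le_zero.1 hk, birkhoffMax]
  | succ n ih =>
    rcases hk.lt_or_eq with hk | rfl
    · exact (ih (Nat.lt_succ_iff.1 hk)).trans (birkhoffMax_le_succ n x)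
    · exact le_max_right _ _

lemma birkhoffMax_le_max_zero_add : ∀ (n : ℕ) (x : α),
    birkhoffMax f g n x ≤ max 0 (g x + birkhoffMax f g n (f x))
  | 0, _ => le_max_left _ _
  | n + 1, x => by
    refine max_le ((birkhoffMax_le_max_zero_add n x).trans ?_) ?_
    · gcongr
      exact birkhoffMax_le_succ n (f x)
    · rw [birkhoffSum_succ']
      exact le_max_of_le_right (by gcongr; exact birkhoffSum_le_birkhoffMax n.le_succ (f x))

lemma bddAbove_range_birkhoffSum_apply_iff {x : α} :
    BddAbove (range fun n => birkhoffSum f g n (f x)) ↔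
      BddAbove (range fun n => birkhoffSum f g n x) := by
  simp only [bddAbove_def, forall_mem_range]
  constructor
  · rintro ⟨c, hc⟩
    refine ⟨max 0 (g x + c), fun n => ?_⟩
    cases n with
    | zero => simp
    | succ n => exact le_max_of_le_right (by rw [birkhoffSum_succ']; gcongr; exact hc n)
  · rintro ⟨c, hc⟩
    refine ⟨c - g x, fun n => ?_⟩
    have := hc (n + 1)
    rw [birkhoffSum_succ'] at this
    linarith

variable [MeasurableSpace α] {μ : Measure α}

lemma measurable_birkhoffSum (hf : Measurable f) (hg : Measurable g) (n : ℕ) :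
    Measurable (birkhoffSum f g n) :=
  Finset.measurable_sum _ fun i _ => hg.comp (hf.iterate i)

lemma measurable_birkhoffMax (hf : Measurable f) (hg : Measurable g) :
    ∀ n, Measurable (birkhoffMax f g n)
  | 0 => measurable_const
  | n + 1 => (measurable_birkhoffMax hf hg n).max (measurable_birkhoffSum hf hg (n + 1))

lemma MeasureTheory.MeasurePreserving.integrable_birkhoffSum (hf : MeasurePreserving f μ μ)
    (hg : Integrable g μ) (n : ℕ) : Integrable (birkhoffSum f g n) μ :=
  integrable_finsetSum _ fun i _ => (hf.iterate i).integrable_comp_of_integrable hg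

lemma MeasureTheory.MeasurePreserving.integrable_birkhoffMax [IsFiniteMeasure μ]
    (hf : MeasurePreserving f μ μ) (hg : Integrable g μ) :
    ∀ n, Integrable (birkhoffMax f g n) μ
  | 0 => integrable_const 0
  | n + 1 => (hf.integrable_birkhoffMax hg n).sup (hf.integrable_birkhoffSum hg (n + 1))

/-- Garsia's maximal ergodic inequality. -/
theorem MeasureTheory.MeasurePreserving.setIntegral_birkhoffMax_pos_nonneg [IsFiniteMeasure μ]
    (hf : MeasurePreserving f μ μ) (hgm : Measurable g) (hg : Integrable g μ) (n : ℕ) :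
    0 ≤ ∫ x in {x | 0 < birkhoffMax f g n x}, g x ∂μ := by
  set M := birkhoffMax f g n
  set E := {x | 0 < M x}
  have hM : Measurable M := measurable_birkhoffMax hf.measurable hgm n
  have hE : MeasurableSet E := measurableSet_lt measurable_const hM
  have hMi : Integrable M μ := hf.integrable_birkhoffMax hg n
  have hMfi : Integrable (fun x => M (f x)) μ := hf.integrable_comp_of_integrable hMi
  have hzero : ∫ x, (M x - M (f x)) ∂μ = 0 := by
    rw [integral_sub hMi hMfi, ← integral_map hf.measurable.aemeasurable
      (hf.map_eq ▸ hM.aestronglyMeasurable), hf.map_eq, sub_self]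
  have hoff : ∫ x in Eᶜ, (M x - M (f x)) ∂μ ≤ 0 := by
    refine setIntegral_nonpos hE.compl fun x hx => ?_
    have : M x = 0 := le_antisymm (not_lt.1 hx) (birkhoffMax_nonneg n x)
    simpa [this] using birkhoffMax_nonneg n (f x)
  have hon : ∫ x in E, (M x - M (f x)) ∂μ ≤ ∫ x in E, g x ∂μ := by
    refine setIntegral_mono_on (hMi.sub hMfi).integrableOn hg.integrableOn hE fun x hx => ?_
    rcases le_max_iff.1 (birkhoffMax_le_max_zero_add n x) with h | h
    · exact absurd hx (not_lt.2 h)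
    · linarith
  have hsplit : ∫ x in E, (M x - M (f x)) ∂μ + ∫ x in Eᶜ, (M x - M (f x)) ∂μ
      = ∫ x, (M x - M (f x)) ∂μ := integral_add_compl hE (hMi.sub hMfi)
  linarith

theorem MeasureTheory.MeasurePreserving.integral_nonneg_of_ae_not_bddAbove [IsFiniteMeasure μ]
    (hf : MeasurePreserving f μ μ) (hgm : Measurable g) (hg : Integrable g μ)
    (hunb : ∀ᵐ x ∂μ, ¬BddAbove (range fun n => birkhoffSum f g n x)) :
    0 ≤ ∫ x, g x ∂μ := by
  set E : ℕ → Set α := fun n => {x | 0 < birkhoffMax f g n x}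
  have hE : ∀ n, MeasurableSet (E n) := fun n =>
    measurableSet_lt measurable_const (measurable_birkhoffMax hf.measurable hgm n)
  have hEmono : Monotone E := monotone_nat_of_le_succ fun n x hx =>
    hx.trans_le (birkhoffMax_le_succ n x)
  have hcover : ∀ᵐ x ∂μ, x ∈ ⋃ n, E n := by
    filter_upwards [hunb] with x hx
    obtain ⟨_, ⟨n, rfl⟩, hn⟩ := not_bddAbove_iff.1 hx 0
    exact mem_iUnion.2 ⟨n, hn.trans_le (birkhoffSum_le_birkhoffMax le_rfl x)⟩
  have hlim := tendsto_setIntegral_of_monotone hE hEmono hg.integrableOn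
  rw [setIntegral_eq_integral_of_ae_compl_eq_zero (hcover.mono fun x hx hx' => absurd hx hx')]
    at hlim
  exact ge_of_tendsto' hlim (hf.setIntegral_birkhoffMax_pos_nonneg hgm hg)

theorem Ergodic.ae_bddAbove_birkhoffSum_of_measurable [IsFiniteMeasure μ] (hf : Ergodic f μ)
    (hgm : Measurable g) (hg : Integrable g μ) (hneg : ∫ x, g x ∂μ < 0) :
    ∀ᵐ x ∂μ, BddAbove (range fun n => birkhoffSum f g n x) := by
  set A := {x | BddAbove (range fun n => birkhoffSum f g n x)}
  have hA : MeasurableSet A :=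
    measurableSet_bddAbove_range (measurable_birkhoffSum hf.measurable hgm)
  have hfA : f ⁻¹' A = A := ext fun x => bddAbove_range_birkhoffSum_apply_iff
  rcases hf.measure_self_or_compl_eq_zero hA hfA with hA0 | hAc0
  · exact absurd (hf.toMeasurePreserving.integral_nonneg_of_ae_not_bddAbove hgm hg
      (measure_eq_zero_iff_ae_notMem.1 hA0)) (not_le.2 hneg)
  · exact hAc0

theorem Ergodic.ae_bddAbove_birkhoffSum [IsFiniteMeasure μ] (hf : Ergodic f μ)
    (hg : Integrable g μ) (hneg : ∫ x, g x ∂μ < 0) :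
    ∀ᵐ x ∂μ, BddAbove (range fun n => birkhoffSum f g n x) := by
  have hgg' : g =ᵐ[μ] hg.1.mk g := hg.1.ae_eq_mk
  have hsum := ae_all_iff.2 fun n =>
    hf.quasiMeasurePreserving.birkhoffSum_ae_eq_of_ae_eq hgg' n
  filter_upwards [hf.ae_bddAbove_birkhoffSum_of_measurable hg.1.stronglyMeasurable_mk.measurable
    (hg.congr hgg') (by rwa [← integral_congr_ae hgg']), hsum] with x hx hxeq
  simpa only [hxeq] using hx

theorem MeasureTheory.MeasurePreserving.ae_eventually_abs_comp_iterate_le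
    [IsProbabilityMeasure μ] (hf : MeasurePreserving f μ μ) {h : α → ℝ} (hh : Integrable h μ)
    {ε : ℝ} (hε : 0 < ε) :
    ∀ᵐ x ∂μ, ∀ᶠ n in atTop, |h (f^[n] x)| ≤ ε * n := by
  set s : ℕ → Set α := fun n => {x | |h x| / ε ∈ Ioi (n : ℝ)}
  have hs : ∀ n, NullMeasurableSet (s n) μ := fun n =>
    (hh.abs.div_const ε).aemeasurable.nullMeasurableSet_preimage measurableSet_Ioi
  have hsum : ∑' n, μ (f^[n] ⁻¹' s n) ≠ ⊤ := by
    rw [tsum_congr fun n => (hf.iterate n).measure_preimage (hs n)]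
    let : MeasureSpace α := ⟨μ⟩
    exact (ProbabilityTheory.tsum_prob_mem_Ioi_lt_top (hh.abs.div_const ε)
      fun x => div_nonneg (abs_nonneg _) hε.le).ne
  filter_upwards [ae_eventually_notMem hsum] with x hx
  filter_upwards [hx] with n hn
  have : |h (f^[n] x)| / ε ≤ n := not_lt.1 hn
  rwa [div_le_iff₀ hε, mul_comm] at this

end Birkhoff

lemma Sj_eq_birkhoffSum (θi : Ω → Ω) (σ D V τ : Ω → ℝ) (j : ℕ) (ω : Ω) :
    Sj θi σ D V τ j ω = σ (θi^[j] ω) + D (θi^[j] ω)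
      + birkhoffSum θi (V - τ) (j + 1) ω - (V ω - τ ω) := by
  rw [Sj, birkhoffSum, Finset.sum_range_eq_add_Ico _ (by omega : 0 < j + 1),
    Finset.Ico_add_one_right_eq_Icc]
  simp only [Pi.sub_apply, Finset.sum_sub_distrib, Function.iterate_zero_apply]
  ring

lemma Sj_le_of_birkhoffSum_le {θi : Ω → Ω} {σ D V τ : Ω → ℝ} {ε c : ℝ} {j : ℕ} {ω : Ω}
    (hsum : birkhoffSum θi (V - τ + fun _ => ε) (j + 1) ω ≤ c)
    (hgrowth : |(σ + D) (θi^[j] ω)| ≤ ε * j) :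
    Sj θi σ D V τ j ω ≤ c - ε - (V ω - τ ω) := by
  have hconst : birkhoffSum θi (fun _ => ε) (j + 1) ω = (j + 1) * ε := by
    simp [birkhoffSum]
  rw [birkhoffSum_add', hconst] at hsum
  have hσD := (le_abs_self _).trans hgrowth
  rw [Pi.add_apply] at hσD
  rw [Sj_eq_birkhoffSum]
  linarith

theorem Minf_finite_as_general
    [MeasurableSpace Ω] (P : Measure Ω) [IsProbabilityMeasure P]
    (θ : Ω ≃ᵐ Ω) (herg : Ergodic (⇑θ) P)
    (σ D V τ : Ω → ℝ)
    (hσi : Integrable σ P) (hDi : Integrable D P) (hVi : Integrable V P) (hτi : Integrable τ P)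
    (hEV : ∫ ω, (V ω - τ ω) ∂P < 0) :
    ∀ᵐ ω ∂P, (⨆ j : ℕ, ((Sj (⇑θ.symm) σ D V τ (j + 1) ω : ℝ) : EReal)) < ⊤ := by
  -- The margin `ε` in the drift absorbs the sublinear growth of `(σ + D) ∘ θ⁻ʲ`.
  obtain ⟨ε, hε, hdrift⟩ : ∃ ε > 0, ∫ ω, (V ω - τ ω + ε) ∂P < 0 := by
    refine ⟨-(∫ ω, (V ω - τ ω) ∂P) / 2, by linarith, ?_⟩
    rw [integral_add (f := fun ω => V ω - τ ω) (hVi.sub hτi) (integrable_const _), integral_const,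
      probReal_univ, one_smul]
    linarith
  filter_upwards
    [herg.symm.ae_bddAbove_birkhoffSum ((hVi.sub hτi).add (integrable_const ε)) hdrift,
    herg.symm.toMeasurePreserving.ae_eventually_abs_comp_iterate_le (hσi.add hDi) hε]
    with ω ⟨c, hc⟩ hgrowth
  have hS : ∀ᶠ j in atTop, Sj θ.symm σ D V τ j ω ≤ c - ε - (V ω - τ ω) :=
    hgrowth.mono fun j hj => Sj_le_of_birkhoffSum_le (hc ⟨j + 1, rfl⟩) hj
  obtain ⟨B, hB⟩ := (isBoundedUnder_of_eventually_le hS).bddAbove_range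
  exact (iSup_le fun j => EReal.coe_le_coe_iff.2 (hB ⟨j + 1, rfl⟩)).trans_lt (EReal.coe_lt_top B)

/-- if E[V − τ] < 0 then M_∞ < ∞ P-a.s., i.e.
P( sup_{j ≥ 1} S_j < ∞ ) = 1. -/
theorem Minf_finite_as
    [MeasurableSpace Ω] (P : Measure Ω) [IsProbabilityMeasure P]
    (θ : Ω ≃ᵐ Ω) (herg : Ergodic (⇑θ) P)
    (σ D V τ : Ω → ℝ)
    (hσm : Measurable σ) (hDm : Measurable D) (hVm : Measurable V) (hτm : Measurable τ)
    (hσ0 : ∀ ω, 0 ≤ σ ω) (hD0 : ∀ ω, 0 ≤ D ω) (hV0 : ∀ ω, 0 ≤ V ω) (hτ0 : ∀ ω, 0 ≤ τ ω)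
    (hσi : Integrable σ P) (hDi : Integrable D P) (hVi : Integrable V P) (hτi : Integrable τ P)
    (hτpos : ∀ᵐ ω ∂P, 0 < τ ω)
    (hEV : ∫ ω, (V ω - τ ω) ∂P < 0) :
    ∀ᵐ ω ∂P, (⨆ j : ℕ, ((Sj (⇑θ.symm) σ D V τ (j + 1) ω : ℝ) : EReal)) < ⊤ :=
  Minf_finite_as_general P θ herg σ D V τ hσi hDi hVi hτi hEV
end
end

section
/- Suppose E[V − τ] < 0. If Y : Ω → [0,∞) is a measurable random variable satisfying Y ∘ θ = ψ(Y, ·) P-a.s., then P( Y ≤ σ + D + V ) > 0. -/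
/-!
On the event `σ + D + V < Y` the recursion `Y ∘ θ = ψ(Y, ·)` never hits its two reflecting
barriers, so it reads `Y ∘ θ = Y + (V - τ)`. If that event had full probability, `V - τ` would
be a coboundary `Y ∘ θ - Y` of the measure-preserving map `θ`, and an integrable coboundary has
mean zero (compare the integrals of the truncations `max (-n) (min Y n)`, which are invariant,
and pass to the limit by dominated convergence). This contradicts `E[V - τ] < 0`.
-/

open MeasureTheory Filter

noncomputable section

variable {Ω : Type*}

section LinearOrderedAddCommGroup

variable {α : Type*} [AddCommGroup α] [LinearOrder α] [IsOrderedAddMonoid α]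

lemma abs_max_min_sub_max_min_le (l h a b : α) :
    |max l (min a h) - max l (min b h)| ≤ |a - b| := by
  rw [max_comm l, max_comm l]
  exact (abs_max_sub_max_le_abs _ _ _).trans <| by
    simpa using abs_min_sub_min_le_max a h b h

lemma max_neg_min_eq_self_of_abs_le {r a : α} (h : |a| ≤ r) : max (-r) (min a r) = a := by
  rw [abs_le] at h
  rw [min_eq_left h.2, max_eq_right h.1]

end LinearOrderedAddCommGroup

namespace MeasureTheory.MeasurePreserving

variable {α : Type*} [MeasurableSpace α] {μ : Measure α} [IsFiniteMeasure μ] {f : α → α}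

lemma integral_eq_zero_of_comp_eq_add (hf : MeasurePreserving f μ μ) {Y g : α → ℝ}
    (hY : AEStronglyMeasurable Y μ) (hg : Integrable g μ)
    (hYg : ∀ᵐ x ∂μ, Y (f x) = Y x + g x) : ∫ x, g x ∂μ = 0 := by
  set T : ℕ → ℝ → ℝ := fun n y => max (-n) (min y n) with hT
  have hT_cont (n : ℕ) : Continuous (T n) := by fun_prop
  have hT_int (n : ℕ) {Z : α → ℝ} (hZ : AEStronglyMeasurable Z μ) :
      Integrable (fun x => T n (Z x)) μ := by
    refine Integrable.of_bound ((hT_cont n).comp_aestronglyMeasurable hZ) n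
      (Eventually.of_forall fun x => ?_)
    rw [Real.norm_eq_abs, abs_le]
    exact ⟨le_max_left _ _, max_le (by simp) (min_le_right _ _)⟩
  have hzero (n : ℕ) : ∫ x, (T n (Y x + g x) - T n (Y x)) ∂μ = 0 := by
    have hinv : ∫ x, T n (Y (f x)) ∂μ = ∫ x, T n (Y x) ∂μ := by
      rw [← integral_map (f := fun y => T n (Y y)) hf.aemeasurable, hf.map_eq]
      simpa only [hf.map_eq] using (hT_cont n).comp_aestronglyMeasurable hY
    rw [integral_sub (hT_int n (Z := fun x => Y x + g x) (hY.add hg.1)) (hT_int n hY), ← hinv,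
      sub_eq_zero]
    exact integral_congr_ae (hYg.mono fun x hx => by simp only [hx])
  have hlim : Tendsto (fun n : ℕ => ∫ x, (T n (Y x + g x) - T n (Y x)) ∂μ) atTop
      (nhds (∫ x, g x ∂μ)) := by
    refine tendsto_integral_of_dominated_convergence (fun x => |g x|) (fun n => ?_) hg.abs
      (fun n => Eventually.of_forall fun x => ?_) (Eventually.of_forall fun x => ?_)
    · exact ((hT_cont n).comp_aestronglyMeasurable (hY.add hg.1)).sub
        ((hT_cont n).comp_aestronglyMeasurable hY)
    · simpa using abs_max_min_sub_max_min_le (-(n : ℝ)) n (Y x + g x) (Y x)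
    · refine tendsto_atTop_of_eventually_const (i₀ := ⌈max |Y x| |Y x + g x|⌉₊)
        fun n hn => ?_
      have hn' : max |Y x| |Y x + g x| ≤ n := (Nat.le_ceil _).trans (mod_cast hn)
      simp only [hT, max_neg_min_eq_self_of_abs_le ((le_max_left _ _).trans hn'),
        max_neg_min_eq_self_of_abs_le ((le_max_right _ _).trans hn')]
      ring
  exact tendsto_nhds_unique hlim (by simp [hzero])

end MeasureTheory.MeasurePreserving

lemma psi_eq_of_le {σ D V τ : Ω → ℝ} {y : ℝ} {ω : Ω} (hy : σ ω + D ω ≤ y)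
    (hpos : 0 < psi σ D V τ y ω) : psi σ D V τ y ω = y + V ω - τ ω := by
  have hmax : max (y + V ω) (σ ω + D ω + V ω) = y + V ω := max_eq_left (by linarith)
  rw [psi, hmax] at hpos ⊢
  exact max_eq_left (lt_max_iff.1 hpos |>.resolve_right (lt_irrefl 0)).le

theorem stationary_solution_below_sigma_D_V_general
    [MeasurableSpace Ω] (P : Measure Ω) [IsProbabilityMeasure P]
    (θ : Ω ≃ᵐ Ω) (herg : Ergodic (⇑θ) P)
    (σ D V τ : Ω → ℝ)
    (hσ0 : ∀ ω, 0 ≤ σ ω) (hD0 : ∀ ω, 0 ≤ D ω) (hV0 : ∀ ω, 0 ≤ V ω)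
    (hVi : Integrable V P) (hτi : Integrable τ P)
    (hEV : ∫ ω, (V ω - τ ω) ∂P < 0)
    (Y : Ω → ℝ) (hYm : Measurable Y)
    (hYsol : ∀ᵐ ω ∂P, Y (θ ω) = psi σ D V τ (Y ω) ω) :
    0 < P {ω : Ω | Y ω ≤ σ ω + D ω + V ω} := by
  by_contra! hcon
  have hθ := herg.toMeasurePreserving
  have hgt : ∀ᵐ ω ∂P, σ ω + D ω + V ω < Y ω :=
    (measure_eq_zero_iff_ae_notMem.1 (nonpos_iff_eq_zero.1 hcon)).mono fun _ h => not_le.1 h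
  have hstep : ∀ᵐ ω ∂P, Y (θ ω) = Y ω + (V ω - τ ω) := by
    filter_upwards [hgt, hθ.quasiMeasurePreserving.ae hgt, hYsol] with ω h hθω hsol
    have hpos : 0 < psi σ D V τ (Y ω) ω := by
      linarith [hσ0 (θ ω), hD0 (θ ω), hV0 (θ ω)]
    rw [hsol, psi_eq_of_le (by linarith [hV0 ω]) hpos]
    ring
  have hmean := hθ.integral_eq_zero_of_comp_eq_add hYm.aestronglyMeasurable (hVi.sub hτi) hstep
  exact hEV.ne hmean

/-- if E[V − τ] < 0 and Y solves the stationary equation Y ∘ θ = ψ(Y, ·)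
P-a.s., then P( Y ≤ σ + D + V ) > 0. -/
theorem stationary_solution_below_sigma_D_V
    [MeasurableSpace Ω] (P : Measure Ω) [IsProbabilityMeasure P]
    (θ : Ω ≃ᵐ Ω) (herg : Ergodic (⇑θ) P)
    (σ D V τ : Ω → ℝ)
    (hσm : Measurable σ) (hDm : Measurable D) (hVm : Measurable V) (hτm : Measurable τ)
    (hσ0 : ∀ ω, 0 ≤ σ ω) (hD0 : ∀ ω, 0 ≤ D ω) (hV0 : ∀ ω, 0 ≤ V ω) (hτ0 : ∀ ω, 0 ≤ τ ω)
    (hσi : Integrable σ P) (hDi : Integrable D P) (hVi : Integrable V P) (hτi : Integrable τ P)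
    (hτpos : ∀ᵐ ω ∂P, 0 < τ ω)
    (hEV : ∫ ω, (V ω - τ ω) ∂P < 0)
    (Y : Ω → ℝ) (hYm : Measurable Y) (hY0 : ∀ ω, 0 ≤ Y ω)
    (hYsol : ∀ᵐ ω ∂P, Y (θ ω) = psi σ D V τ (Y ω) ω) :
    0 < P {ω : Ω | Y ω ≤ σ ω + D ω + V ω} :=
  stationary_solution_below_sigma_D_V_general P θ herg σ D V τ hσ0 hD0 hV0 hVi hτi hEV Y hYm hYsol
end
end

section
/- (Minimality of the Loynes solution.) If U : Ω → [0,∞) is a measurable random variable satisfying U ∘ θ = ψ(U, ·) P-a.s., then M_∞ ≤ U P-a.s.; in particular M_∞ is the minimal nonnegative solution of the stationary equation Y ∘ θ = ψ(Y, ·). -/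
open MeasureTheory Filter

noncomputable section

variable {Ω : Type*}

/-! The argument is pathwise. Write `φ = θ⁻¹`. Off a null set, `U x = ψ(U (φ x), φ x)` holds at every
point `x` of the backward orbit of `ω`. Since `S_{j+1}(ω) = S_j(φ ω) + V(φ ω) − τ(φ ω)`, `S_0 = σ + D`
and `ψ(y, x) ≥ max(y, σ x + D x) + V x − τ x`, the bound `S_j ≤ max(U, σ + D)` at `φ ω` yields
`S_{j+1} ≤ U` at `ω`; induction on `j` along the orbit gives `S_{j+1} ≤ U` for all `j`, and with
`U ≥ 0` this is `M_∞ ≤ U`. -/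

theorem MeasureTheory.Measure.QuasiMeasurePreserving.ae_forall_iterate {α : Type*}
    [MeasurableSpace α] {μ : Measure α} {f : α → α} (hf : Measure.QuasiMeasurePreserving f μ μ)
    {p : α → Prop} (hp : ∀ᵐ x ∂μ, p x) : ∀ᵐ x ∂μ, ∀ k, p (f^[k] x) :=
  ae_all_iff.2 fun k => (hf.iterate k).ae hp

namespace Loynes

open Finset Function

variable (φ : Ω → Ω) (σ D V τ : Ω → ℝ)

theorem sum_Icc_iterate_succ (f : Ω → ℝ) (j : ℕ) (ω : Ω) :
    ∑ i ∈ Icc 1 (j + 1), f (φ^[i] ω) = f (φ ω) + ∑ i ∈ Icc 1 j, f (φ^[i] (φ ω)) := by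
  induction j with
  | zero => simp
  | succ j ih =>
    rw [sum_Icc_succ_top (by omega), ih, sum_Icc_succ_top (by omega), iterate_succ_apply φ (j + 1)]
    ring

@[simp]
theorem Sj_zero (ω : Ω) : Sj φ σ D V τ 0 ω = σ ω + D ω := by
  simp [Sj]

theorem Sj_succ (j : ℕ) (ω : Ω) :
    Sj φ σ D V τ (j + 1) ω = Sj φ σ D V τ j (φ ω) + V (φ ω) - τ (φ ω) := by
  simp only [Sj, sum_Icc_iterate_succ, iterate_succ_apply]
  ring

theorem le_psi_of_le_max {a y : ℝ} {x : Ω} (h : a ≤ max y (σ x + D x)) :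
    a + V x - τ x ≤ psi σ D V τ y x := by
  rw [psi, max_add_add_right]
  exact le_max_of_le_left (by linarith)

theorem Minf_le {y : ℝ} {ω : Ω} (hy : 0 ≤ y) (hS : ∀ j, Sj φ σ D V τ (j + 1) ω ≤ y) :
    Minf φ σ D V τ ω ≤ (y : EReal) :=
  max_le (EReal.coe_nonneg.2 hy) (iSup_le fun j => EReal.coe_le_coe (hS j))

variable {σ D V τ} {U : Ω → ℝ}

theorem Sj_succ_le_of_forall_iterate {ω : Ω}
    (hU : ∀ k, U (φ^[k] ω) = psi σ D V τ (U (φ (φ^[k] ω))) (φ (φ^[k] ω))) (j : ℕ) :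
    Sj φ σ D V τ (j + 1) ω ≤ U ω := by
  have hU_ω : U ω = psi σ D V τ (U (φ ω)) (φ ω) := hU 0
  rw [Sj_succ, hU_ω]
  refine le_psi_of_le_max σ D V τ ?_
  cases j with
  | zero => simp
  | succ j =>
    have hU_φ : ∀ k, U (φ^[k] (φ ω)) = psi σ D V τ (U (φ (φ^[k] (φ ω)))) (φ (φ^[k] (φ ω))) :=
      fun k => by simpa only [iterate_succ_apply] using hU (k + 1)
    exact le_max_of_le_left (Sj_succ_le_of_forall_iterate hU_φ j)

end Loynes

theorem Minf_minimal_general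
    [MeasurableSpace Ω] (P : Measure Ω)
    (θ : Ω ≃ᵐ Ω) (herg : Ergodic (⇑θ) P)
    (σ D V τ : Ω → ℝ)
    (U : Ω → ℝ) (hU0 : ∀ ω, 0 ≤ U ω)
    (hUsol : ∀ᵐ ω ∂P, U (θ ω) = psi σ D V τ (U ω) ω) :
    ∀ᵐ ω ∂P, Minf (⇑θ.symm) σ D V τ ω ≤ ((U ω : ℝ) : EReal) := by
  have hmp : MeasurePreserving θ.symm P P := herg.toMeasurePreserving.symm θ
  have hsol : ∀ᵐ ω ∂P, U ω = psi σ D V τ (U (θ.symm ω)) (θ.symm ω) := by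
    filter_upwards [hmp.quasiMeasurePreserving.ae hUsol] with ω hω
    rwa [θ.apply_symm_apply] at hω
  filter_upwards [hmp.quasiMeasurePreserving.ae_forall_iterate hsol] with ω hω
  exact Loynes.Minf_le _ σ D V τ (hU0 ω) (Loynes.Sj_succ_le_of_forall_iterate _ hω)

/-- minimality of the Loynes solution: if U solves the stationary
equation U ∘ θ = ψ(U, ·) P-a.s., then M_∞ ≤ U P-a.s. -/
theorem Minf_minimal
    [MeasurableSpace Ω] (P : Measure Ω) [IsProbabilityMeasure P]
    (θ : Ω ≃ᵐ Ω) (herg : Ergodic (⇑θ) P)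
    (σ D V τ : Ω → ℝ)
    (hσm : Measurable σ) (hDm : Measurable D) (hVm : Measurable V) (hτm : Measurable τ)
    (hσ0 : ∀ ω, 0 ≤ σ ω) (hD0 : ∀ ω, 0 ≤ D ω) (hV0 : ∀ ω, 0 ≤ V ω) (hτ0 : ∀ ω, 0 ≤ τ ω)
    (hσi : Integrable σ P) (hDi : Integrable D P) (hVi : Integrable V P) (hτi : Integrable τ P)
    (hτpos : ∀ᵐ ω ∂P, 0 < τ ω)
    (U : Ω → ℝ) (hUm : Measurable U) (hU0 : ∀ ω, 0 ≤ U ω)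
    (hUsol : ∀ᵐ ω ∂P, U (θ ω) = psi σ D V τ (U ω) ω) :
    ∀ᵐ ω ∂P, Minf (⇑θ.symm) σ D V τ ω ≤ ((U ω : ℝ) : EReal) :=
  Minf_minimal_general P θ herg σ D V τ U hU0 hUsol
end
end

section
/- (Lemma 3.2.) Let W, Y : Ω → [0,∞) be measurable random variables with W ≤ Y P-a.s. Then for every n ≥ 0, Z_n^W ≤ Y_n^Y P-a.s., where Z_0^W = W, Z_{n+1}^W(ω) = φ( Z_n^W(ω), θ^n ω ), Y_0^Y = Y and Y_{n+1}^Y(ω) = ψ( Y_n^Y(ω), θ^n ω ). -/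
open MeasureTheory Filter

noncomputable section

variable {Ω : Type*}

/-- φ(x, ω): the one-step workload map, defined by its four cases:
x + σ − τ if x + σ − τ > 0 and x ≤ D; x − τ if x − τ > 0 and x > D;
max(x + σ + V − τ, 0) if x + σ − τ ≤ 0 and x ≤ D; 0 if x − τ ≤ 0 and x > D. -/
def phi (σ D V τ : Ω → ℝ) (x : ℝ) (ω : Ω) : ℝ :=
  if x ≤ D ω then
    if 0 < x + σ ω - τ ω then x + σ ω - τ ω else max (x + σ ω + V ω - τ ω) 0
  else
    if 0 < x - τ ω then x - τ ω else 0

/-- The workload sequence Z_0^W = W, Z_{n+1}^W(ω) = φ(Z_n^W(ω), θⁿω). -/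
def Zseq (θf : Ω → Ω) (σ D V τ : Ω → ℝ) (W : Ω → ℝ) : ℕ → Ω → ℝ
  | 0 => W
  | n + 1 => fun ω => phi σ D V τ (Zseq θf σ D V τ W n ω) (θf^[n] ω)

/-- The majorizing sequence Y_0^Y = Y, Y_{n+1}^Y(ω) = ψ(Y_n^Y(ω), θⁿω). -/
def Yseq (θf : Ω → Ω) (σ D V τ : Ω → ℝ) (Y : Ω → ℝ) : ℕ → Ω → ℝ
  | 0 => Y
  | n + 1 => fun ω => psi σ D V τ (Yseq θf σ D V τ Y n ω) (θf^[n] ω)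

theorem sub_le_psi {σ D V τ : Ω → ℝ} {a y : ℝ} {ω : Ω}
    (h : a ≤ max (y + V ω) (σ ω + D ω + V ω)) : a - τ ω ≤ psi σ D V τ y ω :=
  le_max_of_le_left (sub_le_sub_right h _)

/-- Each branch of `φ` is dominated by one of the two terms of the inner maximum of `ψ`:
the branches with `x ≤ D` by `σ + D + V`, those with `D < x` by `y + V`. -/
theorem phi_le_psi {σ D V τ : Ω → ℝ} {x y : ℝ} {ω : Ω} (hV : 0 ≤ V ω) (hxy : x ≤ y) :
    phi σ D V τ x ω ≤ psi σ D V τ y ω := by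
  unfold phi
  split_ifs with hxD hpos hpos'
  · exact sub_le_psi (le_max_of_le_right (by linarith))
  · exact max_le (sub_le_psi (le_max_of_le_right (by linarith))) (le_max_right _ _)
  · exact sub_le_psi (le_max_of_le_left (by linarith))
  · exact le_max_right _ _

theorem Zseq_le_Yseq_general
    [MeasurableSpace Ω] (P : Measure Ω)
    (θ : Ω ≃ᵐ Ω)
    (σ D V τ : Ω → ℝ)
    (hV0 : ∀ ω, 0 ≤ V ω)
    (W Y : Ω → ℝ)
    (hWY : ∀ᵐ ω ∂P, W ω ≤ Y ω) :
    ∀ n : ℕ, ∀ᵐ ω ∂P, Zseq (⇑θ) σ D V τ W n ω ≤ Yseq (⇑θ) σ D V τ Y n ω := by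
  intro n
  induction n with
  | zero => exact hWY
  | succ n ih =>
    filter_upwards [ih] with ω h
    exact phi_le_psi (hV0 _) h

/-- Lemma 3.2: if W ≤ Y P-a.s. then for every n, Z_n^W ≤ Y_n^Y P-a.s. -/
theorem Zseq_le_Yseq
    [MeasurableSpace Ω] (P : Measure Ω) [IsProbabilityMeasure P]
    (θ : Ω ≃ᵐ Ω) (herg : Ergodic (⇑θ) P)
    (σ D V τ : Ω → ℝ)
    (hσm : Measurable σ) (hDm : Measurable D) (hVm : Measurable V) (hτm : Measurable τ)
    (hσ0 : ∀ ω, 0 ≤ σ ω) (hD0 : ∀ ω, 0 ≤ D ω) (hV0 : ∀ ω, 0 ≤ V ω) (hτ0 : ∀ ω, 0 ≤ τ ω)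
    (hσi : Integrable σ P) (hDi : Integrable D P) (hVi : Integrable V P) (hτi : Integrable τ P)
    (hτpos : ∀ᵐ ω ∂P, 0 < τ ω)
    (W Y : Ω → ℝ) (hWm : Measurable W) (hYm : Measurable Y)
    (hW0 : ∀ ω, 0 ≤ W ω) (hY0 : ∀ ω, 0 ≤ Y ω)
    (hWY : ∀ᵐ ω ∂P, W ω ≤ Y ω) :
    ∀ n : ℕ, ∀ᵐ ω ∂P, Zseq (⇑θ) σ D V τ W n ω ≤ Yseq (⇑θ) σ D V τ Y n ω :=
  Zseq_le_Yseq_general P θ σ D V τ hV0 W Y hWY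
end
end

section
/- (Lemma: lower bound for the tail ratio.) Under the standing assumptions and hypotheses (H1)–(H3), liminf_{x→∞} F̄(x)/B̄^r(x) ≥ ρ₁ f*(γ). -/
open MeasureTheory Filter Topology

noncomputable section

/-- A tail function T = Ḡ is long-tailed if Ḡ(x − y)/Ḡ(x) → 1 as x → ∞ for every y > 0. -/
def LongTailedTail (T : ℝ → ℝ) : Prop :=
  ∀ y > (0:ℝ), Tendsto (fun x => T (x - y) / T x) atTop (𝓝 1)

/-- Smith's condition: Ḡ(x) = exp(−Λ(x)) with Λ(x) = ∫₀ˣ λ̃, λ̃ nonincreasing and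
tending to 0 at infinity, and limsup_{x→∞} Λ(2x)/Λ(x) < 2. -/
def SmithCondition (T : ℝ → ℝ) : Prop :=
  ∃ lam : ℝ → ℝ, Antitone lam ∧ Tendsto lam atTop (𝓝 0) ∧
    (∀ x : ℝ, T x = Real.exp (-(∫ u in (0:ℝ)..x, lam u))) ∧
    limsup (fun x => (∫ u in (0:ℝ)..(2 * x), lam u) / ∫ u in (0:ℝ)..x, lam u) atTop < 2

/-!
Since `F_γ ≤ 1`, the convolution term in the second renewal equation is nonnegative, so
`F̄ ≥ ρ₁ f*(γ) B̄ʳ + ρ₂ V̄ʳ`; dividing by `B̄ʳ`, the `V̄ʳ` term vanishes by (H1). (H3) bounds the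
ratio above, without which `liminf` on `ℝ` would take a junk value.
-/

lemma one_div_setIntegral_Ici_mul_setIntegral_Icc_le_one {μ : Measure ℝ} {f : ℝ → ℝ} {a : ℝ}
    (hf : ∀ x, 0 ≤ f x) (hpos : 0 < ∫ x in Set.Ici a, f x ∂μ) (t : ℝ) :
    (1 / ∫ x in Set.Ici a, f x ∂μ) * ∫ x in Set.Icc a t, f x ∂μ ≤ 1 := by
  have hint : IntegrableOn f (Set.Ici a) μ := Integrable.of_integral_ne_zero hpos.ne'
  have hmono : ∫ x in Set.Icc a t, f x ∂μ ≤ ∫ x in Set.Ici a, f x ∂μ :=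
    setIntegral_mono_set hint (ae_of_all _ hf) (ae_of_all _ Set.Icc_subset_Ici_self)
  rw [one_div_mul_eq_div]
  exact div_le_one_of_le₀ hmono hpos.le

lemma le_liminf_div_of_mul_add_le {l : Filter ℝ} [l.NeBot] {u v w : ℝ → ℝ} {a c M : ℝ}
    (hvw : Tendsto (fun x => v x / w x) l (𝓝 0)) (hw : ∀ᶠ x in l, 0 < w x)
    (hlow : ∀ᶠ x in l, a * w x + c * v x ≤ u x) (hup : ∀ᶠ x in l, u x ≤ M * w x) :
    a ≤ liminf (fun x => u x / w x) l := by
  have hlim : Tendsto (fun x => a + c * (v x / w x)) l (𝓝 a) := by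
    simpa using (hvw.const_mul c).const_add a
  have hle : ∀ᶠ x in l, a + c * (v x / w x) ≤ u x / w x := by
    filter_upwards [hw, hlow] with x hwx hx
    rw [le_div_iff₀ hwx]
    calc (a + c * (v x / w x)) * w x = a * w x + c * v x := by field_simp
      _ ≤ u x := hx
  have hbdd : IsBoundedUnder (· ≤ ·) l (fun x => u x / w x) := by
    refine isBoundedUnder_of_eventually_le (a := M) ?_
    filter_upwards [hw, hup] with x hwx hx
    exact (div_le_iff₀ hwx).2 hx
  calc a = liminf (fun x => a + c * (v x / w x)) l := hlim.liminf_eq.symm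
    _ ≤ liminf (fun x => u x / w x) l :=
      liminf_le_liminf hle hlim.isBoundedUnder_ge hbdd.isCoboundedUnder_ge

theorem tail_ratio_liminf_general
    (F B : StieltjesFunction ℝ)
    (hBtop : Tendsto (⇑B) atTop (𝓝 1))
    (β lam γ ρ₁ ρ₂ fs : ℝ)
    (hβpos : 0 < β)
    (hlam : 0 < lam)
    (hρ₁ : ρ₁ = lam * β)
    (hfs : fs = ∫ x in Set.Ici (0:ℝ), Real.exp (-γ * x) ∂F.measure) (hfspos : 0 < fs)
    (Fγ Br Vr : ℝ → ℝ)
    (hFγ : ∀ x, Fγ x = (1 / fs) * ∫ u in Set.Icc (0:ℝ) x, Real.exp (-γ * u) ∂F.measure)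
    (hBrtailpos : ∀ x : ℝ, 0 ≤ x → 0 < 1 - Br x)
    (hEq2 : ∀ x : ℝ, 0 ≤ x →
       1 - F x = ρ₁ * fs * (1 - Br x) + ρ₂ * (1 - Vr x)
         + ρ₁ * fs * ((1 / β) * ∫ u in (0:ℝ)..x, (1 - Fγ (x - u)) * (1 - B u)))
    (H1 : Tendsto (fun x => (1 - Vr x) / (1 - Br x)) atTop (𝓝 0))
    (H3 : ∃ M > (0:ℝ), ∀ x ≥ (0:ℝ), 1 - F x ≤ M * (1 - Br x))
    :
    ρ₁ * fs ≤ liminf (fun x => (1 - F x) / (1 - Br x)) atTop := by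
  have hρ₁_nonneg : 0 ≤ ρ₁ := by rw [hρ₁]; positivity
  have hFγ_le : ∀ t, Fγ t ≤ 1 := fun t => (hFγ t).trans_le <| by
    subst hfs
    exact one_div_setIntegral_Ici_mul_setIntegral_Icc_le_one (fun _ => (Real.exp_pos _).le) hfspos t
  have hB_le : ∀ t, B t ≤ 1 := fun t => B.mono.ge_of_tendsto hBtop t
  obtain ⟨M, -, hM⟩ := H3
  refine le_liminf_div_of_mul_add_le (c := ρ₂) (M := M) H1 ?_ ?_ ?_
  · filter_upwards [eventually_ge_atTop 0] with x hx using hBrtailpos x hx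
  · filter_upwards [eventually_ge_atTop 0] with x hx
    have hconv : 0 ≤ ∫ u in (0:ℝ)..x, (1 - Fγ (x - u)) * (1 - B u) :=
      intervalIntegral.integral_nonneg hx fun u _ =>
        mul_nonneg (sub_nonneg.2 (hFγ_le _)) (sub_nonneg.2 (hB_le u))
    rw [hEq2 x hx]
    have : 0 ≤ ρ₁ * fs * ((1 / β) * ∫ u in (0:ℝ)..x, (1 - Fγ (x - u)) * (1 - B u)) := by
      positivity
    linarith
  · filter_upwards [eventually_ge_atTop 0] with x hx using hM x hx

/-- lower bound for the tail ratio: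
liminf_{x→∞} F̄(x)/B̄^r(x) ≥ ρ₁ f*(γ). -/
theorem tail_ratio_liminf
    (F B V : StieltjesFunction ℝ)
    (hFneg : ∀ x < (0:ℝ), F x = 0) (hBneg : ∀ x < (0:ℝ), B x = 0)
    (hVneg : ∀ x < (0:ℝ), V x = 0)
    (hFtop : Tendsto (⇑F) atTop (𝓝 1)) (hBtop : Tendsto (⇑B) atTop (𝓝 1))
    (hVtop : Tendsto (⇑V) atTop (𝓝 1))
    (β ϑ lam lam2 γ ρ₁ ρ₂ fs : ℝ)
    (hBint : IntegrableOn (fun y => 1 - B y) (Set.Ioi 0))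
    (hVint : IntegrableOn (fun y => 1 - V y) (Set.Ioi 0))
    (hβ : β = ∫ y in Set.Ioi (0:ℝ), (1 - B y)) (hβpos : 0 < β)
    (hϑ : ϑ = ∫ y in Set.Ioi (0:ℝ), (1 - V y)) (hϑpos : 0 < ϑ)
    (hlam : 0 < lam) (hlam2 : 0 < lam2) (hγ : 0 < γ)
    (hρ₁ : ρ₁ = lam * β) (hρ₂ : ρ₂ = lam2 * ϑ) (hρ : ρ₁ + ρ₂ < 1)
    (hfs : fs = ∫ x in Set.Ici (0:ℝ), Real.exp (-γ * x) ∂F.measure) (hfspos : 0 < fs)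
    (Fγ Br Vr : ℝ → ℝ)
    (hFγ : ∀ x, Fγ x = (1 / fs) * ∫ u in Set.Icc (0:ℝ) x, Real.exp (-γ * u) ∂F.measure)
    (hBr : ∀ x, Br x = (1 / β) * ∫ y in (0:ℝ)..x, (1 - B y))
    (hVr : ∀ x, Vr x = (1 / ϑ) * ∫ y in (0:ℝ)..x, (1 - V y))
    (hFtailpos : ∀ x : ℝ, 0 ≤ x → 0 < 1 - F x)
    (hBrtailpos : ∀ x : ℝ, 0 ≤ x → 0 < 1 - Br x)
    (hEq1 : ∀ x : ℝ, 0 ≤ x →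
       1 - F x = ρ₁ * fs * (1 - Fγ x) + ρ₂ * (1 - Vr x)
         + ρ₁ * fs * ((1 / fs) *
             ∫ u in Set.Icc (0:ℝ) x, (1 - Br (x - u)) * Real.exp (-γ * u) ∂F.measure))
    (hEq2 : ∀ x : ℝ, 0 ≤ x →
       1 - F x = ρ₁ * fs * (1 - Br x) + ρ₂ * (1 - Vr x)
         + ρ₁ * fs * ((1 / β) * ∫ u in (0:ℝ)..x, (1 - Fγ (x - u)) * (1 - B u)))
    (H1 : Tendsto (fun x => (1 - Vr x) / (1 - Br x)) atTop (𝓝 0))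
    (H2 : Tendsto (fun x => (1 - Vr x) / (1 - F x)) atTop (𝓝 0))
    (H3 : ∃ M > (0:ℝ), ∀ x ≥ (0:ℝ), 1 - F x ≤ M * (1 - Br x))
    :
    ρ₁ * fs ≤ liminf (fun x => (1 - F x) / (1 - Br x)) atTop :=
  tail_ratio_liminf_general F B hBtop β lam γ ρ₁ ρ₂ fs hβpos hlam hρ₁ hfs hfspos Fγ Br Vr hFγ
    hBrtailpos hEq2 H1 H3
end
end
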